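/- arXiv:1701.05492 — 2 statements merged into one kernel-verified Lean document; each statement's English description precedes it below -/
import Mathlib

section
/- For every binary matrix M (with no all-zero row), η(M) = ζ(M): the minimum number of pairwise distinct rows in a conflict-free row split of M equals the minimum, over all branchings B of the containment digraph D_M, of the number of B-irreducible vertices |I(B)|. -/
/-- The support of column `j` of binary matrix `M`: the set of rows with a `1` in column `j`. -/
def Supp {α β : Type*} [Fintype α] [DecidableEq α] (M : α → β → Bool) (j : β) : Finset α :=
  Finset.univ.filter (fun r => M r j = true)

/-- `M` is conflict-free: no two columns contain three rows forming the pattern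
`[[1,1],[1,0],[0,1]]`. -/
def ConflictFree {α β : Type*} (M : α → β → Bool) : Prop :=
  ∀ i j : β, ¬ ∃ r r' r'' : α, M r i = true ∧ M r j = true ∧ M r' i = true ∧
    M r' j = false ∧ M r'' i = false ∧ M r'' j = true

/-- `M'` is a row split of `M` via the assignment `f` of rows of `M'` to rows of `M`:
the parts are nonempty (`f` surjective) and each row of `M` is the bitwise OR of its part. -/
def IsRowSplit {α α' β : Type*} (M : α → β → Bool) (M' : α' → β → Bool) (f : α' → α) : Prop :=
  Function.Surjective f ∧ ∀ i j, M i j = true ↔ ∃ r', f r' = i ∧ M' r' j = true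

/-- `v` is a vertex of the containment digraph `D_M`, i.e. the support of some column. -/
def IsSupport {α β : Type*} [Fintype α] [DecidableEq α] (M : α → β → Bool)
    (v : Finset α) : Prop := ∃ j, v = Supp M j

/-- `B` is a branching of the containment digraph `D_M`: its arcs are arcs of `D_M`
(proper inclusions of supports) and every vertex has at most one outgoing arc. -/
def IsBranching {α β : Type*} [Fintype α] [DecidableEq α] (M : α → β → Bool)
    (B : Finset α → Finset α → Prop) : Prop :=
  (∀ u v, B u v → IsSupport M u ∧ IsSupport M v ∧ u ⊂ v) ∧
  (∀ u v w, B u v → B u w → v = w)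

/-- The set `U(B)` of `B`-uncovered pairs `(r, v)`: `v` a vertex of `D_M`, `r ∈ v`, and
`r` belongs to no `B`-in-neighbor of `v`. -/
def UncovPairs {α β : Type*} [Fintype α] [DecidableEq α] (M : α → β → Bool)
    (B : Finset α → Finset α → Prop) : Set (α × Finset α) :=
  {p | IsSupport M p.2 ∧ p.1 ∈ p.2 ∧ ∀ u, B u p.2 → p.1 ∉ u}

/-- The set `I(B)` of `B`-irreducible vertices of `D_M`. -/
def IrredVerts {α β : Type*} [Fintype α] [DecidableEq α] (M : α → β → Bool)
    (B : Finset α → Finset α → Prop) : Set (Finset α) :=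
  {v | IsSupport M v ∧ ∃ r ∈ v, ∀ u, B u v → r ∉ u}

/-- `γ(M)`: the minimum number of rows of a conflict-free row split of `M`. -/
noncomputable def gammaM {α β : Type*} (M : α → β → Bool) : ℕ :=
  sInf {k | ∃ (m' : ℕ) (M' : Fin m' → β → Bool) (f : Fin m' → α),
    IsRowSplit M M' f ∧ ConflictFree M' ∧ k = m'}

/-- `η(M)`: the minimum number of pairwise distinct rows of a conflict-free row split of `M`. -/
noncomputable def etaM {α β : Type*} [Fintype β] [DecidableEq β] (M : α → β → Bool) : ℕ :=
  sInf {k | ∃ (m' : ℕ) (M' : Fin m' → β → Bool) (f : Fin m' → α),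
    IsRowSplit M M' f ∧ ConflictFree M' ∧
    k = (Finset.univ.image (fun r : Fin m' => fun j => M' r j)).card}

/-- `β(M)`: the minimum number of uncovered pairs over all branchings of `D_M`. -/
noncomputable def betaM {α β : Type*} [Fintype α] [DecidableEq α] (M : α → β → Bool) : ℕ :=
  sInf {k | ∃ B, IsBranching M B ∧ (UncovPairs M B).ncard = k}

/-- `ζ(M)`: the minimum number of irreducible vertices over all branchings of `D_M`. -/
noncomputable def zetaM {α β : Type*} [Fintype α] [DecidableEq α] (M : α → β → Bool) : ℕ :=
  sInf {k | ∃ B, IsBranching M B ∧ (IrredVerts M B).ncard = k}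

section AuxLemmas

open Relation

variable {m n : ℕ}

lemma mem_Supp {M : Fin m → Fin n → Bool} {r : Fin m} {j : Fin n} :
    r ∈ Supp M j ↔ M r j = true := by
  simp [Supp]

lemma laminar {m' : ℕ} {M' : Fin m' → Fin n → Bool} (h : ConflictFree M') (i j : Fin n) :
    Supp M' i ⊆ Supp M' j ∨ Supp M' j ⊆ Supp M' i ∨
      ∀ a, ¬(a ∈ Supp M' i ∧ a ∈ Supp M' j) := by
  by_contra hcon
  push_neg at hcon
  obtain ⟨hij, hji, a, hai, haj⟩ := hcon
  rw [Finset.not_subset] at hij hji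
  obtain ⟨b, hbi, hbj⟩ := hij
  obtain ⟨c, hcj, hci⟩ := hji
  refine h i j ⟨a, b, c, mem_Supp.mp hai, mem_Supp.mp haj, mem_Supp.mp hbi, ?_, ?_, mem_Supp.mp hcj⟩
  · simpa [mem_Supp] using hbj
  · simpa [mem_Supp] using hci

lemma reach_subset {M : Fin m → Fin n → Bool} {B : Finset (Fin m) → Finset (Fin m) → Prop}
    (hB : IsBranching M B) {u w : Finset (Fin m)} (h : ReflTransGen B u w) : u ⊆ w := by
  induction h with
  | refl => exact subset_rfl
  | tail _ hbc ih => exact ih.trans (hB.1 _ _ hbc).2.2.subset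

lemma reach_total {B : Finset (Fin m) → Finset (Fin m) → Prop}
    (hB : ∀ u v w, B u v → B u w → v = w) {a b : Finset (Fin m)}
    (hab : ReflTransGen B a b) :
    ∀ c, ReflTransGen B a c → ReflTransGen B b c ∨ ReflTransGen B c b := by
  induction hab using ReflTransGen.head_induction_on with
  | refl => exact fun c h => Or.inl h
  | @head x y hxy hyb ih =>
    intro c hc
    rcases hc.cases_head with rfl | ⟨d, hxd, hdc⟩
    · exact Or.inr (ReflTransGen.head hxy hyb)
    · have : y = d := hB _ _ _ hxy hxd
      exact ih c (this ▸ hdc)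

lemma descend {M : Fin m → Fin n → Bool} {B : Finset (Fin m) → Finset (Fin m) → Prop}
    (hB : IsBranching M B) :
    ∀ (w : Finset (Fin m)) (r : Fin m), IsSupport M w → r ∈ w →
      ∃ v, (r, v) ∈ UncovPairs M B ∧ ReflTransGen B v w := by
  classical
  intro w
  induction w using Finset.strongInduction with
  | _ w ih =>
    intro r hw hr
    by_cases h : ∀ u, B u w → r ∉ u
    · exact ⟨w, ⟨hw, hr, h⟩, ReflTransGen.refl⟩
    · push_neg at h
      obtain ⟨u, hBu, hru⟩ := h
      obtain ⟨v, hv, hreach⟩ := ih u (hB.1 _ _ hBu).2.2 r (hB.1 _ _ hBu).1 hru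
      exact ⟨v, hv, hreach.trans (ReflTransGen.single hBu)⟩

lemma exists_split_of_branching (M : Fin m → Fin n → Bool) (hrow : ∀ r, ∃ j, M r j = true)
    (B : Finset (Fin m) → Finset (Fin m) → Prop) (hB : IsBranching M B) :
    ∃ k ∈ {k | ∃ (m' : ℕ) (M' : Fin m' → Fin n → Bool) (f : Fin m' → Fin m),
      IsRowSplit M M' f ∧ ConflictFree M' ∧
      k = (Finset.univ.image (fun r : Fin m' => fun j => M' r j)).card},
      k ≤ (IrredVerts M B).ncard := by
  classical
  set U : Finset (Fin m × Finset (Fin m)) := (Set.toFinite (UncovPairs M B)).toFinset with hU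
  set e := U.equivFin.symm with he
  set M' : Fin U.card → Fin n → Bool :=
    fun i j => if ReflTransGen B (e i).1.2 (Supp M j) then true else false with hM'
  set f : Fin U.card → Fin m := fun i => (e i).1.1 with hf
  have huncov : ∀ i, (e i).1 ∈ UncovPairs M B := by
    intro i
    exact (Set.Finite.mem_toFinset _).mp (e i).2
  have toReach : ∀ i j, M' i j = true → ReflTransGen B (e i).1.2 (Supp M j) := by
    intro i j hij
    by_contra hre
    simp [hM', hre] at hij
  have ofReach : ∀ i j, ReflTransGen B (e i).1.2 (Supp M j) → M' i j = true := by
    intro i j hre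
    simp [hM', hre]
  have hsplit : IsRowSplit M M' f := by
    constructor
    · intro r
      obtain ⟨j, hj⟩ := hrow r
      obtain ⟨v, hv, -⟩ := descend hB (Supp M j) r ⟨j, rfl⟩ (mem_Supp.mpr hj)
      refine ⟨e.symm ⟨(r, v), (Set.Finite.mem_toFinset _).mpr hv⟩, ?_⟩
      simp only [hf, Equiv.apply_symm_apply]
    · intro r j
      constructor
      · intro hrj
        obtain ⟨v, hv, hreach⟩ := descend hB (Supp M j) r ⟨j, rfl⟩ (mem_Supp.mpr hrj)
        refine ⟨e.symm ⟨(r, v), (Set.Finite.mem_toFinset _).mpr hv⟩, ?_, ?_⟩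
        · simp only [hf, Equiv.apply_symm_apply]
        · apply ofReach
          simp only [Equiv.apply_symm_apply]
          exact hreach
      · rintro ⟨i, rfl, hij⟩
        have hreach := toReach _ _ hij
        have hsub := reach_subset hB hreach
        exact mem_Supp.mp (hsub (huncov i).2.1)
  have hcf : ConflictFree M' := by
    rintro i0 j0 ⟨a, b, c, ha1, ha2, hb1, hb2, hc1, hc2⟩
    have hra1 := toReach _ _ ha1
    have hra2 := toReach _ _ ha2
    rcases reach_total hB.2 hra1 _ hra2 with hcase | hcase
    · have := ofReach b j0 ((toReach _ _ hb1).trans hcase)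
      rw [this] at hb2; exact Bool.noConfusion hb2
    · have := ofReach c i0 ((toReach _ _ hc2).trans hcase)
      rw [this] at hc1; exact Bool.noConfusion hc1
  refine ⟨_, ⟨U.card, M', f, hsplit, hcf, rfl⟩, ?_⟩
  set g : Finset (Fin m) → (Fin n → Bool) :=
    fun v j => if ReflTransGen B v (Supp M j) then true else false with hg
  have hfinI : (IrredVerts M B).Finite := Set.toFinite _
  have hsub : Finset.univ.image (fun r : Fin U.card => fun j => M' r j) ⊆
      hfinI.toFinset.image g := by
    intro x hx
    rw [Finset.mem_image] at hx ⊢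
    obtain ⟨i, -, rfl⟩ := hx
    refine ⟨(e i).1.2, ?_, rfl⟩
    rw [Set.Finite.mem_toFinset]
    obtain ⟨hs, hmem, hun⟩ := huncov i
    exact ⟨hs, (e i).1.1, hmem, hun⟩
  calc (Finset.univ.image (fun r : Fin U.card => fun j => M' r j)).card
      ≤ (hfinI.toFinset.image g).card := Finset.card_le_card hsub
    _ ≤ hfinI.toFinset.card := Finset.card_image_le
    _ = (IrredVerts M B).ncard := (Set.ncard_eq_toFinset_card _ hfinI).symm

lemma exists_branching_of_split (M : Fin m → Fin n → Bool) {m' : ℕ}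
    (M' : Fin m' → Fin n → Bool) (f : Fin m' → Fin m)
    (hs : IsRowSplit M M' f) (hcf : ConflictFree M') :
    ∃ B, IsBranching M B ∧ (IrredVerts M B).ncard ≤
      (Finset.univ.image (fun r : Fin m' => fun j => M' r j)).card := by
  classical
  set T : Finset (Fin m) → Finset (Fin m') :=
    fun v => if h : IsSupport M v then Supp M' h.choose else ∅ with hTdef
  have hT : ∀ v (h : IsSupport M v), ∃ j, v = Supp M j ∧ T v = Supp M' j := by
    intro v h
    exact ⟨h.choose, h.choose_spec, by simp [hTdef, dif_pos h]⟩
  have hK1 : ∀ v, IsSupport M v → ∀ r : Fin m, r ∈ v ↔ ∃ r' ∈ T v, f r' = r := by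
    intro v h r
    obtain ⟨j, hvj, hTj⟩ := hT v h
    rw [hTj, hvj, mem_Supp, hs.2 r j]
    constructor
    · rintro ⟨r', h1, h2⟩; exact ⟨r', mem_Supp.mpr h2, h1⟩
    · rintro ⟨r', h1, h2⟩; exact ⟨r', h2, mem_Supp.mp h1⟩
  have hmono : ∀ u v, IsSupport M u → IsSupport M v → T u ⊆ T v → u ⊆ v := by
    intro u v hu hv hTuv r hr
    obtain ⟨r', hr', hfr⟩ := (hK1 u hu r).mp hr
    exact (hK1 v hv r).mpr ⟨r', hTuv hr', hfr⟩
  have hinj : ∀ u v, IsSupport M u → IsSupport M v → T u = T v → u = v := by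
    intro u v hu hv h
    exact Finset.Subset.antisymm (hmono u v hu hv h.le) (hmono v u hv hu h.ge)
  have hlam : ∀ u v, IsSupport M u → IsSupport M v → (T u ∩ T v).Nonempty →
      T u ⊆ T v ∨ T v ⊆ T u := by
    intro u v hu hv ⟨a, ha⟩
    obtain ⟨i, -, hTi⟩ := hT u hu
    obtain ⟨j, -, hTj⟩ := hT v hv
    rw [Finset.mem_inter] at ha
    rcases laminar hcf i j with h1 | h1 | h1
    · left; rw [hTi, hTj]; exact h1
    · right; rw [hTi, hTj]; exact h1
    · exact absurd ⟨hTi ▸ ha.1, hTj ▸ ha.2⟩ (h1 a)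
  set B : Finset (Fin m) → Finset (Fin m) → Prop := fun u v =>
    IsSupport M u ∧ IsSupport M v ∧ T u ⊂ T v ∧
      ∀ w, IsSupport M w → T u ⊂ T w → T v ⊆ T w with hBdef
  have hBr : IsBranching M B := by
    constructor
    · rintro u v ⟨hu, hv, hlt, -⟩
      refine ⟨hu, hv, ssubset_of_subset_of_ne (hmono u v hu hv hlt.subset) ?_⟩
      rintro rfl
      exact ssubset_irrefl _ hlt
    · rintro u v w ⟨hu, hv, hltv, hminv⟩ ⟨-, hw, hltw, hminw⟩
      exact hinj v w hv hw (Finset.Subset.antisymm (hminv w hw hltw) (hminw v hv hltv))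
  refine ⟨B, hBr, ?_⟩
  -- choice of uncovered row and its preimage in T v
  have hexr' : ∀ v (h : v ∈ IrredVerts M B), ∃ r', r' ∈ T v ∧ f r' = h.2.choose := by
    intro v h
    have := (hK1 v h.1 h.2.choose).mp h.2.choose_spec.1
    simpa using this
  set pick : ∀ v, v ∈ IrredVerts M B → Fin m' := fun v h => (hexr' v h).choose with hpickdef
  have hpick1 : ∀ v h, pick v h ∈ T v := fun v h => (hexr' v h).choose_spec.1
  have hpick2 : ∀ v h, f (pick v h) = h.2.choose := fun v h => (hexr' v h).choose_spec.2
  set phi : Finset (Fin m) → (Fin n → Bool) := fun v =>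
    if h : v ∈ IrredVerts M B then (fun j => M' (pick v h) j) else (fun _ => false) with hphidef
  have hphi : ∀ v (h : v ∈ IrredVerts M B), phi v = fun j => M' (pick v h) j := by
    intro v h
    simp only [hphidef]
    rw [dif_pos h]
  have hfinI : (IrredVerts M B).Finite := Set.toFinite _
  have key : ∀ (a b : Finset (Fin m)) (ha : IsSupport M a) (hb : b ∈ IrredVerts M B),
      T a ⊂ T b → (∃ r' ∈ T a, f r' = hb.2.choose) → False := by
    rintro a b ha hb hab ⟨r', hr'Ta, hfr'⟩
    set C : Finset (Finset (Fin m)) :=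
      Finset.univ.filter (fun z => IsSupport M z ∧ T a ⊆ T z ∧ T z ⊂ T b) with hCdef
    have haC : a ∈ C := by
      rw [hCdef, Finset.mem_filter]
      exact ⟨Finset.mem_univ _, ha, subset_rfl, hab⟩
    obtain ⟨z, hzC, hzmax⟩ := Finset.exists_max_image C (fun z => (T z).card) ⟨a, haC⟩
    rw [hCdef, Finset.mem_filter] at hzC
    obtain ⟨-, hzS, hzaz, hzzb⟩ := hzC
    have hBzb : B z b := by
      refine ⟨hzS, hb.1, hzzb, ?_⟩
      intro y hy hzy
      have hint : (T y ∩ T b).Nonempty :=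
        ⟨r', Finset.mem_inter.mpr ⟨hzy.subset (hzaz hr'Ta), hzzb.subset (hzaz hr'Ta)⟩⟩
      rcases hlam y b hy hb.1 hint with hyb | hby
      · rcases eq_or_ne (T y) (T b) with heq | hne2
        · exact heq.ge
        · exfalso
          have hyC : y ∈ C := by
            rw [hCdef, Finset.mem_filter]
            exact ⟨Finset.mem_univ _, hy, hzaz.trans hzy.subset,
              ssubset_of_subset_of_ne hyb hne2⟩
          exact absurd (Finset.card_lt_card hzy) (not_lt.mpr (hzmax y hyC))
      · exact hby
    have hmem : hb.2.choose ∈ z := (hK1 z hzS _).mpr ⟨r', hzaz hr'Ta, hfr'⟩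
    exact hb.2.choose_spec.2 z hBzb hmem
  have hmaps : ∀ v ∈ hfinI.toFinset, phi v ∈
      Finset.univ.image (fun r : Fin m' => fun j => M' r j) := by
    intro v hv
    rw [Set.Finite.mem_toFinset] at hv
    rw [Finset.mem_image]
    exact ⟨pick v hv, Finset.mem_univ _, (hphi v hv).symm⟩
  have hinjOn : Set.InjOn phi (hfinI.toFinset : Set (Finset (Fin m))) := by
    intro v hv' w hw' heq
    rw [Finset.mem_coe, Set.Finite.mem_toFinset] at hv' hw'
    by_contra hne
    rw [hphi v hv', hphi w hw'] at heq
    have hmem1 : pick w hw' ∈ T v := by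
      obtain ⟨jv, -, hTv⟩ := hT v hv'.1
      have h1 : M' (pick v hv') jv = true := mem_Supp.mp (hTv ▸ hpick1 v hv')
      have h2 : M' (pick w hw') jv = true := by rw [← congrFun heq jv]; exact h1
      rw [hTv]; exact mem_Supp.mpr h2
    have hmem2 : pick v hv' ∈ T w := by
      obtain ⟨jw, -, hTw⟩ := hT w hw'.1
      have h1 : M' (pick w hw') jw = true := mem_Supp.mp (hTw ▸ hpick1 w hw')
      have h2 : M' (pick v hv') jw = true := by rw [congrFun heq jw]; exact h1
      rw [hTw]; exact mem_Supp.mpr h2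
    have hTne : T v ≠ T w := fun h => hne (hinj v w hv'.1 hw'.1 h)
    rcases hlam v w hv'.1 hw'.1
        ⟨pick v hv', Finset.mem_inter.mpr ⟨hpick1 v hv', hmem2⟩⟩ with h | h
    · exact key v w hv'.1 hw' (ssubset_of_subset_of_ne h hTne)
        ⟨pick w hw', hmem1, hpick2 w hw'⟩
    · exact key w v hw'.1 hv' (ssubset_of_subset_of_ne h hTne.symm)
        ⟨pick v hv', hmem2, hpick2 v hv'⟩
  calc (IrredVerts M B).ncard = hfinI.toFinset.card := Set.ncard_eq_toFinset_card _ hfinI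
    _ ≤ _ := Finset.card_le_card_of_injOn phi hmaps hinjOn

end AuxLemmas

/-- `η(M) = ζ(M)`: the minimum number of distinct rows of a conflict-free row split of `M`
equals the minimum number of irreducible vertices over all branchings of `D_M`. -/

theorem stmt_13 {m n : ℕ} (M : Fin m → Fin n → Bool)
    (hrow : ∀ r, ∃ j, M r j = true) :
    etaM M = zetaM M := by
  classical
  have hBempty : IsBranching M (fun _ _ => False) :=
    ⟨fun u v h => h.elim, fun u v w h _ => h.elim⟩
  have hzne : Set.Nonempty {k | ∃ B, IsBranching M B ∧ (IrredVerts M B).ncard = k} :=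
    ⟨(IrredVerts M (fun _ _ => False)).ncard, fun _ _ => False, hBempty, rfl⟩
  have hene : Set.Nonempty {k | ∃ (m' : ℕ) (M' : Fin m' → Fin n → Bool) (f : Fin m' → Fin m),
      IsRowSplit M M' f ∧ ConflictFree M' ∧
      k = (Finset.univ.image (fun r : Fin m' => fun j => M' r j)).card} := by
    obtain ⟨k, hk, -⟩ := exists_split_of_branching M hrow (fun _ _ => False) hBempty
    exact ⟨k, hk⟩
  apply le_antisymm
  · -- etaM ≤ zetaM
    obtain ⟨B, hB, hcard⟩ := Nat.sInf_mem hzne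
    obtain ⟨k, hk, hle⟩ := exists_split_of_branching M hrow B hB
    have h1 : etaM M ≤ k := Nat.sInf_le hk
    have h2 : zetaM M = (IrredVerts M B).ncard := by rw [zetaM, hcard]
    rw [h2]
    exact h1.trans hle
  · -- zetaM ≤ etaM
    obtain ⟨m', M', f, hsplit, hcf, hkeq⟩ := Nat.sInf_mem hene
    obtain ⟨B, hB, hle⟩ := exists_branching_of_split M M' f hsplit hcf
    have h1 : zetaM M ≤ (IrredVerts M B).ncard := Nat.sInf_le ⟨B, hB, rfl⟩
    have h2 : etaM M = (Finset.univ.image (fun r : Fin m' => fun j => M' r j)).card := hkeq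
    rw [h2]
    exact h1.trans hle
end

section
/- For every binary matrix M (no all-zero rows, no all-zero columns) with exactly k pairwise distinct columns, k/2 ≤ η(M) ≤ k, where η(M) is the minimum number of pairwise distinct rows in a conflict-free row split of M. -/
/-!
Upper bound: split every `1` of `M` into a row of its own, the indicator of the columns equal to
its column. Two such rows are equal or have disjoint supports, so the split is conflict-free, and
it has exactly `k` distinct rows.

Lower bound: in a conflict-free row split, the supports of the columns, taken as sets of distinct
rows, pairwise are nested or disjoint, and they are nonempty. Distinct columns of `M` have distinct
supports, and a laminar family of nonempty subsets of a set of size `η` has at most `2η - 1`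
members.
-/

open Finset Function

def IsLaminar {α : Type*} (F : Finset (Finset α)) : Prop :=
  ∀ S ∈ F, ∀ T ∈ F, S ⊆ T ∨ T ⊆ S ∨ Disjoint S T

theorem IsLaminar.mono {α : Type*} {F G : Finset (Finset α)} (hF : IsLaminar F) (hGF : G ⊆ F) :
    IsLaminar G :=
  fun S hS T hT => hF S (hGF hS) T (hGF hT)

/- Split off a member `S` of `F` of maximal size other than `U`: every other member is nested in
`S` or disjoint from it, and induction applies to `S` and to `U \ S`. -/
theorem IsLaminar.card_le_two_mul_sub_one {α : Type*} [DecidableEq α] {F : Finset (Finset α)}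
    (hF : IsLaminar F) {U : Finset α} (hne : ∀ S ∈ F, S.Nonempty) (hU : ∀ S ∈ F, S ⊆ U) :
    #F ≤ 2 * #U - 1 := by
  induction U using Finset.strongInduction generalizing F with
  | H U ih =>
  have hFG : #F - 1 ≤ #(F.erase U) := pred_card_le_card_erase
  rcases F.eq_empty_or_nonempty with rfl | ⟨S₀, hS₀⟩
  · simp
  have hU₀ : 0 < #U := card_pos.2 ((hne S₀ hS₀).mono (hU S₀ hS₀))
  rcases (F.erase U).eq_empty_or_nonempty with hG | hG
  · rw [hG, card_empty] at hFG
    omega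
  obtain ⟨S, hSG, hSmax⟩ := (F.erase U).exists_max_image card hG
  obtain ⟨hSU, hSF⟩ := mem_erase.1 hSG
  have hS : S.Nonempty := hne S hSF
  have hSsU : S ⊂ U := ssubset_of_subset_of_ne (hU S hSF) hSU
  set A := (F.erase U).filter (· ⊆ S)
  set B := (F.erase U).filter (¬ · ⊆ S)
  have hAB : #A + #B = #(F.erase U) := card_filter_add_card_filter_not _
  have hBU : ∀ T ∈ B, T ⊆ U \ S := by
    intro T hT
    obtain ⟨hTG, hTnS⟩ := mem_filter.1 hT
    obtain ⟨-, hTF⟩ := mem_erase.1 hTG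
    rcases hF S hSF T hTF with hST | hTS | hdisj
    · exact absurd (eq_of_subset_of_card_le hST (hSmax T hTG)).ge hTnS
    · exact absurd hTS hTnS
    · exact subset_sdiff.2 ⟨hU T hTF, hdisj.symm⟩
  have hA : #A ≤ 2 * #S - 1 :=
    ih S hSsU (hF.mono ((filter_subset _ _).trans (erase_subset _ _)))
      (fun T hT => hne T (mem_of_mem_erase (mem_filter.1 hT).1)) (fun T hT => (mem_filter.1 hT).2)
  have hB : #B ≤ 2 * #(U \ S) - 1 :=
    ih (U \ S) (sdiff_ssubset hSsU.subset hS)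
      (hF.mono ((filter_subset _ _).trans (erase_subset _ _)))
      (fun T hT => hne T (mem_of_mem_erase (mem_filter.1 hT).1)) hBU
  have hUS : #(U \ S) = #U - #S := card_sdiff_of_subset hSsU.subset
  have hSpos : 0 < #S := card_pos.2 hS
  have hSlt : #S < #U := card_lt_card hSsU
  omega

section RowSplit

variable {α α' β : Type*} {M : α → β → Bool} {M' : α' → β → Bool} {f : α' → α}

theorem exists_fin_rowSplit [Fintype α'] [Fintype β] (h : IsRowSplit M M' f)
    (hcf : ConflictFree M') :
    ∃ (m' : ℕ) (M'' : Fin m' → β → Bool) (f' : Fin m' → α), IsRowSplit M M'' f' ∧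
      ConflictFree M'' ∧ #(univ.image M') = #(univ.image fun r j => M'' r j) := by
  classical
  let e := (Fintype.equivFin α').symm
  refine ⟨_, M' ∘ e, f ∘ e, ⟨h.1.comp e.surjective, fun i j => (h.2 i j).trans ?_⟩,
    fun i j ⟨r, r', r'', hr⟩ => hcf i j ⟨e r, e r', e r'', hr⟩, ?_⟩
  · exact e.surjective.exists
  · rw [← image_image (g := M'), image_univ_equiv]

theorem etaM_le_card_image [Fintype α'] [Fintype β] [DecidableEq β] (h : IsRowSplit M M' f)
    (hcf : ConflictFree M') : etaM M ≤ #(univ.image M') :=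
  Nat.sInf_le (exists_fin_rowSplit h hcf)

theorem exists_fin_rowSplit_etaM_eq [Fintype α'] [Fintype β] [DecidableEq β]
    (h : IsRowSplit M M' f) (hcf : ConflictFree M') :
    ∃ (m' : ℕ) (M'' : Fin m' → β → Bool) (f' : Fin m' → α), IsRowSplit M M'' f' ∧
      ConflictFree M'' ∧ etaM M = #(univ.image fun r j => M'' r j) :=
  (Nat.sInf_mem ⟨_, exists_fin_rowSplit h hcf⟩ : etaM M ∈ _)

def suppRows [Fintype α'] [Fintype β] (M' : α' → β → Bool) (j : β) : Finset (β → Bool) :=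
  (univ.image M').filter (· j = true)

theorem suppRows_nonempty [Fintype α'] [Fintype β] {j : β} (h : ∃ r, M' r j = true) :
    (suppRows M' j).Nonempty := by
  obtain ⟨r, hr⟩ := h
  exact ⟨M' r, mem_filter.2 ⟨mem_image_of_mem _ (mem_univ r), hr⟩⟩

theorem ConflictFree.isLaminar_suppRows [Fintype α'] [Fintype β] (hcf : ConflictFree M') :
    IsLaminar (univ.image (suppRows M')) := by
  simp only [IsLaminar, mem_image, mem_univ, true_and, forall_exists_index,
    forall_apply_eq_imp_iff]
  intro i j
  by_contra! h
  obtain ⟨hij, hji, hdisj⟩ := h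
  obtain ⟨v, hvi, hvj⟩ := not_subset.1 hij
  obtain ⟨w, hwj, hwi⟩ := not_subset.1 hji
  obtain ⟨u, hui, huj⟩ := not_disjoint_iff.1 hdisj
  simp only [suppRows, mem_filter, mem_image, mem_univ, true_and, not_and, Bool.not_eq_true]
    at hvi hvj hwi hwj hui huj
  obtain ⟨⟨r, rfl⟩, hri⟩ := hui
  obtain ⟨⟨r', rfl⟩, hr'i⟩ := hvi
  obtain ⟨⟨r'', rfl⟩, hr''j⟩ := hwj
  exact hcf i j ⟨r, r', r'', hri, huj.2, hr'i, hvj ⟨r', rfl⟩, hwi ⟨r'', rfl⟩, hr''j⟩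

theorem IsRowSplit.card_image_swap_le [Fintype α] [Fintype α'] [Fintype β]
    (h : IsRowSplit M M' f) : #(univ.image (swap M)) ≤ #(univ.image (suppRows M')) := by
  classical
  let Φ : Finset (β → Bool) → α → Bool := fun S i => decide (∃ r, f r = i ∧ M' r ∈ S)
  have hcol : swap M = Φ ∘ suppRows M' := by
    funext j i
    rw [Bool.eq_iff_iff]
    simp [Φ, suppRows, h.2 i j]
  rw [hcol, ← image_image]
  exact card_image_le

theorem IsRowSplit.card_image_swap_le_two_mul [Fintype α] [Fintype α'] [Fintype β]
    (h : IsRowSplit M M' f) (hcf : ConflictFree M') (hcol : ∀ j, ∃ i, M i j = true) :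
    #(univ.image (swap M)) ≤ 2 * #(univ.image M') := by
  refine h.card_image_swap_le.trans ?_
  have := hcf.isLaminar_suppRows.card_le_two_mul_sub_one (U := univ.image M') ?_ ?_
  · omega
  all_goals simp only [mem_image, mem_univ, true_and, forall_exists_index, forall_apply_eq_imp_iff]
  · intro j
    obtain ⟨i, hi⟩ := hcol j
    obtain ⟨r, -, hr⟩ := (h.2 i j).1 hi
    exact suppRows_nonempty ⟨r, hr⟩
  · exact fun j => filter_subset _ _

def classSplit [Fintype α] (M : α → β → Bool) : {p : α × β // M p.1 p.2 = true} → β → Bool :=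
  fun p j => decide (swap M j = swap M p.1.2)

theorem isRowSplit_classSplit [Fintype α] (hrow : ∀ i, ∃ j, M i j = true) :
    IsRowSplit M (classSplit M) (fun p => p.1.1) := by
  refine ⟨fun i => ?_, fun i j => ⟨fun hij => ⟨⟨(i, j), hij⟩, rfl, by simp [classSplit]⟩, ?_⟩⟩
  · obtain ⟨j, hj⟩ := hrow i
    exact ⟨⟨(i, j), hj⟩, rfl⟩
  · rintro ⟨⟨⟨i, j'⟩, hij'⟩, rfl, hj⟩
    simp only [classSplit, decide_eq_true_eq] at hj
    exact (congrFun hj i).trans hij'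

theorem conflictFree_classSplit [Fintype α] : ConflictFree (classSplit M) := by
  rintro i j ⟨p, q, -, hpi, hpj, hqi, hqj, -, -⟩
  simp only [classSplit, decide_eq_true_eq, decide_eq_false_iff_not] at hpi hpj hqi hqj
  exact hqj (hpj.trans (hpi.symm.trans hqi))

theorem card_image_classSplit_le [Fintype α] [Fintype β] :
    #(univ.image (classSplit M)) ≤ #(univ.image (swap M)) := by
  let Ψ : (α → Bool) → β → Bool := fun c j => decide (swap M j = c)
  calc #(univ.image (classSplit M)) ≤ #((univ.image (swap M)).image Ψ) := by
        refine card_le_card fun _ => ?_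
        simp only [mem_image, mem_univ, true_and]
        rintro ⟨p, rfl⟩
        exact ⟨_, ⟨p.1.2, rfl⟩, rfl⟩
    _ ≤ _ := card_image_le

end RowSplit

/-- If `M` has no all-zero row, no all-zero column and exactly `k` pairwise distinct columns,
then `k/2 ≤ η(M) ≤ k` (the lower bound stated in the exact form `k ≤ 2·η(M)`). -/
theorem stmt_14 {m n : ℕ} (M : Fin m → Fin n → Bool)
    (hrow : ∀ r, ∃ j, M r j = true)
    (hcol : ∀ j, ∃ r, M r j = true)
    (k : ℕ)
    (hk : k = (Finset.univ.image (fun j : Fin n => fun r : Fin m => M r j)).card) :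
    k ≤ 2 * etaM M ∧ etaM M ≤ k := by
  have hsplit := isRowSplit_classSplit hrow
  have hcf : ConflictFree (classSplit M) := conflictFree_classSplit
  obtain ⟨m', M', f', hsplit', hcf', hη⟩ := exists_fin_rowSplit_etaM_eq hsplit hcf
  subst hk
  constructor
  · rw [hη]
    exact hsplit'.card_image_swap_le_two_mul hcf' hcol
  · exact (etaM_le_card_image hsplit hcf).trans card_image_classSplit_le
end
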